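/- Let Ω ⊆ ℂ be a nonempty open connected set, let φ₁, …, φ_N : ℂ → ℝ be harmonic on Ω and linearly independent as functions on Ω, and let ω ⊆ Ω be a nonempty open set whose closure is compact and contained in Ω. Then there exists a constant C > 0 such that for every coefficient vector a = (a₁, …, a_N) ∈ ℝᴺ, the Euclidean norm satisfies ‖a‖_{ℝᴺ} ≤ C · ‖Σₙ aₙ φₙ‖_{L²(ω)} (the coefficient stability estimate for the exact modes). -/

import Mathlib

open MeasureTheory

/-- A function `u : ℂ → ℝ` is harmonic on an open set `Ω ⊆ ℂ` if it is twice continuously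
differentiable on `Ω` and its Laplacian vanishes at every point of `Ω`. -/
def HarmonicOnSet (u : ℂ → ℝ) (Ω : Set ℂ) : Prop :=
  ContDiffOn ℝ 2 u Ω ∧
    ∀ z ∈ Ω,
      fderiv ℝ (fun w => fderiv ℝ u w 1) z 1 +
        fderiv ℝ (fun w => fderiv ℝ u w Complex.I) z Complex.I = 0


theorem harmonic_assoc_diff (u : ℂ → ℝ) (Ω : Set ℂ) (hΩo : IsOpen Ω)
    (hu2 : ContDiffOn ℝ 2 u Ω)
    (hlap : ∀ z ∈ Ω, fderiv ℝ (fun w => fderiv ℝ u w 1) z 1 +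
        fderiv ℝ (fun w => fderiv ℝ u w Complex.I) z Complex.I = 0)
    {z : ℂ} (hz : z ∈ Ω) :
    DifferentiableAt ℂ
      (fun w => ((fderiv ℝ u w 1 : ℝ) : ℂ) - Complex.I * ((fderiv ℝ u w Complex.I : ℝ) : ℂ)) z := by
  have huz : ContDiffAt ℝ 2 u z := (hu2 z hz).contDiffAt (hΩo.mem_nhds hz)
  have hF : ContDiffAt ℝ 1 (fderiv ℝ u) z := huz.fderiv_right (by norm_num)
  have hFd : DifferentiableAt ℝ (fderiv ℝ u) z := hF.differentiableAt one_ne_zero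
  set A := fderiv ℝ (fderiv ℝ u) z with hA
  have hsymm : ∀ v w, A v w = A w v := huz.isSymmSndFDerivAt (by simp)
  have happ : ∀ c : ℂ, fderiv ℝ (fun w => fderiv ℝ u w c) z =
      (ContinuousLinearMap.apply ℝ ℝ c).comp A := fun c =>
    (((ContinuousLinearMap.apply ℝ ℝ c).hasFDerivAt).comp z hFd.hasFDerivAt).fderiv
  have hlap' : A 1 1 + A Complex.I Complex.I = 0 := by
    have := hlap z hz
    rwa [happ 1, happ Complex.I] at this
  -- the real derivative of f
  set L : ℂ →L[ℝ] ℂ :=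
    (Complex.ofRealCLM.comp ((ContinuousLinearMap.apply ℝ ℝ (1:ℂ)).comp A)) -
      Complex.I • (Complex.ofRealCLM.comp ((ContinuousLinearMap.apply ℝ ℝ Complex.I).comp A))
    with hL
  have h1 : HasFDerivAt (fun w => ((fderiv ℝ u w 1 : ℝ) : ℂ))
      (Complex.ofRealCLM.comp ((ContinuousLinearMap.apply ℝ ℝ (1:ℂ)).comp A)) z :=
    (Complex.ofRealCLM.hasFDerivAt).comp z
      (((ContinuousLinearMap.apply ℝ ℝ (1:ℂ)).hasFDerivAt).comp z hFd.hasFDerivAt)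
  have h2 : HasFDerivAt (fun w => ((fderiv ℝ u w Complex.I : ℝ) : ℂ))
      (Complex.ofRealCLM.comp ((ContinuousLinearMap.apply ℝ ℝ Complex.I).comp A)) z :=
    (Complex.ofRealCLM.hasFDerivAt).comp z
      (((ContinuousLinearMap.apply ℝ ℝ Complex.I).hasFDerivAt).comp z hFd.hasFDerivAt)
  have hfL : HasFDerivAt
      (fun w => ((fderiv ℝ u w 1 : ℝ) : ℂ) - Complex.I * ((fderiv ℝ u w Complex.I : ℝ) : ℂ)) L z :=
    h1.sub (h2.const_mul Complex.I)
  -- the complex derivative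
  set c : ℂ := ((A 1 1 : ℝ) : ℂ) - Complex.I * ((A 1 Complex.I : ℝ) : ℂ) with hc
  have hLv : ∀ v : ℂ, L v = c * v := by
    intro v
    have hv : v = v.re • (1:ℂ) + v.im • Complex.I := by
      simp [Complex.real_smul, Complex.re_add_im]
    have hL1 : L 1 = c := by
      simp [hL, hc, ContinuousLinearMap.sub_apply, ContinuousLinearMap.smul_apply]
    have hLI : L Complex.I = Complex.I * c := by
      have hII : A Complex.I Complex.I = - A 1 1 := by linarith [hlap']
      have hsy : A Complex.I 1 = A 1 Complex.I := hsymm Complex.I 1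
      simp [hL, hc, ContinuousLinearMap.sub_apply, ContinuousLinearMap.smul_apply, hII, hsy]
      ring_nf
      rw [Complex.I_sq]
      ring
    rw [hv, map_add, L.map_smul, L.map_smul, hL1, hLI]
    simp only [Complex.real_smul]
    ring
  set h : ℂ →L[ℂ] ℂ := c • ContinuousLinearMap.id ℂ ℂ with hh
  have hrest : h.restrictScalars ℝ = L := by
    ext v
    simp [hh, hLv v, mul_comm]
  exact (hasFDerivAt_of_restrictScalars ℝ hfL hrest).differentiableAt

/-- Unique continuation for harmonic functions. -/
theorem harmonic_unique_cont (u : ℂ → ℝ) (Ω : Set ℂ) (hΩo : IsOpen Ω) (hc : IsPreconnected Ω)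
    (hu2 : ContDiffOn ℝ 2 u Ω)
    (hlap : ∀ z ∈ Ω, fderiv ℝ (fun w => fderiv ℝ u w 1) z 1 +
        fderiv ℝ (fun w => fderiv ℝ u w Complex.I) z Complex.I = 0)
    (ω : Set ℂ) (hωo : IsOpen ω) (hωne : ω.Nonempty) (hsub : ω ⊆ Ω)
    (h0 : ∀ z ∈ ω, u z = 0) : ∀ z ∈ Ω, u z = 0 := by
  obtain ⟨z₀, hz₀⟩ := hωne
  set f : ℂ → ℂ := fun w =>
    ((fderiv ℝ u w 1 : ℝ) : ℂ) - Complex.I * ((fderiv ℝ u w Complex.I : ℝ) : ℂ) with hf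
  -- f is analytic on Ω
  have hdo : DifferentiableOn ℂ f Ω := fun z hz =>
    (harmonic_assoc_diff u Ω hΩo hu2 hlap hz).differentiableWithinAt
  have hfan : AnalyticOnNhd ℂ f Ω := hdo.analyticOnNhd hΩo
  -- the gradient of u vanishes on ω
  have hgrad0 : ∀ z ∈ ω, fderiv ℝ u z = 0 := by
    intro z hz
    have hev : u =ᶠ[nhds z] (fun _ => (0:ℝ)) := by
      filter_upwards [hωo.mem_nhds hz] with w hw using h0 w hw
    rw [hev.fderiv_eq]
    exact fderiv_const_apply 0
  -- f vanishes near z₀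
  have hfev : f =ᶠ[nhds z₀] 0 := by
    filter_upwards [hωo.mem_nhds hz₀] with w hw
    simp [hf, hgrad0 w hw]
  -- identity theorem
  have hf0 : Set.EqOn f 0 Ω :=
    hfan.eqOn_zero_of_preconnected_of_eventuallyEq_zero hc (hsub hz₀) hfev
  -- hence the gradient of u vanishes on Ω
  have hgradΩ : ∀ z ∈ Ω, fderiv ℝ u z = 0 := by
    intro z hz
    have h := hf0 hz
    simp only [hf, Pi.zero_apply, sub_eq_zero] at h
    have hre := congrArg Complex.re h
    have him := congrArg Complex.im h
    simp [Complex.ofReal_re, Complex.ofReal_im] at hre him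
    ext v
    have hv : v = v.re • (1:ℂ) + v.im • Complex.I := by
      simp [Complex.real_smul, Complex.re_add_im]
    rw [hv, map_add, (fderiv ℝ u z).map_smul, (fderiv ℝ u z).map_smul]
    simp only [ContinuousLinearMap.zero_apply]
    rw [hre, ← him]
    simp
  -- u is locally constant, hence 0 on Ω by preconnectedness
  set S : Set ℂ := {x | u =ᶠ[nhds x] (fun _ => (0:ℝ))} with hS
  have hSopen : IsOpen S := isOpen_setOf_eventually_nhds
  have hz₀S : z₀ ∈ S := by
    filter_upwards [hωo.mem_nhds hz₀] with w hw using h0 w hw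
  have main : closure S ∩ Ω ⊆ S := by
    rintro x ⟨hxc, hxΩ⟩
    obtain ⟨r, hr, hball⟩ := Metric.isOpen_iff.1 hΩo x hxΩ
    obtain ⟨y, hyS, hxy⟩ := Metric.mem_closure_iff.1 hxc (r/2) (by linarith)
    have hysub : Metric.ball y (r/2) ⊆ Ω := fun w hw => hball (by
      have := Metric.mem_ball.1 hw
      have : dist w x ≤ dist w y + dist y x := dist_triangle w y x
      rw [Metric.mem_ball]
      rw [dist_comm] at hxy
      linarith [Metric.mem_ball.1 hw])
    have hdiff : DifferentiableOn ℝ u (Metric.ball y (r/2)) := fun w hw =>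
      (((hu2 w (hysub hw)).contDiffAt (hΩo.mem_nhds (hysub hw))).differentiableAt
        two_ne_zero).differentiableWithinAt
    have hzero : ∀ w ∈ Metric.ball y (r/2), fderivWithin ℝ u (Metric.ball y (r/2)) w = 0 := by
      intro w hw
      rw [fderivWithin_of_isOpen Metric.isOpen_ball hw]
      exact hgradΩ w (hysub hw)
    have hy0 : u y = 0 := hyS.eq_of_nhds
    have hxball : x ∈ Metric.ball y (r/2) := by rw [Metric.mem_ball, dist_comm] at *; exact hxy
    have hconst : ∀ w ∈ Metric.ball y (r/2), u w = 0 := by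
      intro w hw
      have := (convex_ball y (r/2)).is_const_of_fderivWithin_eq_zero hdiff hzero hw
        (Metric.mem_ball_self (by linarith))
      rw [this, hy0]
    filter_upwards [Metric.isOpen_ball.mem_nhds hxball] with w hw using hconst w hw
  have hΩS : Ω ⊆ S := hc.subset_of_closure_inter_subset hSopen ⟨z₀, hsub hz₀, hz₀S⟩ main
  exact fun z hz => ((hΩS hz).eq_of_nhds)

theorem harmonic_sum (Ω : Set ℂ) (hΩo : IsOpen Ω) (N : ℕ) (φ : Fin N → ℂ → ℝ)
    (hφ : ∀ n, HarmonicOnSet (φ n) Ω) (a : Fin N → ℝ) :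
    HarmonicOnSet (fun z => ∑ n, a n * φ n z) Ω := by
  constructor
  · exact ContDiffOn.sum fun n _ => contDiffOn_const.mul (hφ n).1
  intro z hz
  -- differentiability facts for each mode
  have hφd : ∀ (n) (w), w ∈ Ω → DifferentiableAt ℝ (φ n) w := fun n w hw =>
    (((hφ n).1 w hw).contDiffAt (hΩo.mem_nhds hw)).differentiableAt two_ne_zero
  have hφd2 : ∀ (n) (c : ℂ), DifferentiableAt ℝ (fun w => fderiv ℝ (φ n) w c) z := by
    intro n c
    have hF : ContDiffAt ℝ 1 (fderiv ℝ (φ n)) z :=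
      (((hφ n).1 z hz).contDiffAt (hΩo.mem_nhds hz)).fderiv_right (by norm_num)
    exact (((ContinuousLinearMap.apply ℝ ℝ c).hasFDerivAt).comp z
      (hF.differentiableAt one_ne_zero).hasFDerivAt).differentiableAt
  have hgd : ∀ w ∈ Ω, HasFDerivAt (fun z => ∑ n, a n * φ n z)
      (∑ n, a n • fderiv ℝ (φ n) w) w := fun w hw =>
    HasFDerivAt.fun_sum fun n _ => ((hφd n w hw).hasFDerivAt.const_mul (a n))
  have key : ∀ c : ℂ, fderiv ℝ (fun w => fderiv ℝ (fun z => ∑ n, a n * φ n z) w c) z =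
      ∑ n, a n • fderiv ℝ (fun w => fderiv ℝ (φ n) w c) z := by
    intro c
    have hev : (fun w => fderiv ℝ (fun z => ∑ n, a n * φ n z) w c) =ᶠ[nhds z]
        fun w => ∑ n, a n * fderiv ℝ (φ n) w c := by
      filter_upwards [hΩo.mem_nhds hz] with w hw
      rw [(hgd w hw).fderiv]
      simp [ContinuousLinearMap.sum_apply]
    rw [hev.fderiv_eq]
    exact (HasFDerivAt.fun_sum fun n _ =>
      ((hφd2 n c).hasFDerivAt.const_mul (a n))).fderiv
  rw [key 1, key Complex.I]
  simp only [ContinuousLinearMap.sum_apply, ContinuousLinearMap.smul_apply, smul_eq_mul]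
  rw [← Finset.sum_add_distrib]
  refine Finset.sum_eq_zero fun n _ => ?_
  have := (hφ n).2 z hz
  rw [← mul_add, this, mul_zero]

/-- Coefficient stability estimate for the exact modes: the Euclidean norm of the coefficient
vector is controlled by the `L²(ω)`-norm of the corresponding linear combination of the
linearly independent harmonic modes. -/
theorem coefficient_stability
    (Ω : Set ℂ) (hΩopen : IsOpen Ω) (hΩconn : IsConnected Ω)
    (N : ℕ) (φ : Fin N → ℂ → ℝ) (hφ : ∀ n, HarmonicOnSet (φ n) Ω)
    (hindep : ∀ a : Fin N → ℝ, (∀ z ∈ Ω, ∑ n, a n * φ n z = 0) → ∀ n, a n = 0)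
    (ω : Set ℂ) (hωopen : IsOpen ω) (hωne : ω.Nonempty)
    (hωcl : IsCompact (closure ω)) (hωsub : closure ω ⊆ Ω) :
    ∃ C > (0 : ℝ), ∀ a : EuclideanSpace ℝ (Fin N),
      ‖a‖ ≤ C * Real.sqrt (∫ z in ω, (∑ n, a n * φ n z) ^ 2) := by
  classical
  have hcontφ : ∀ n, ContinuousOn (φ n) Ω := fun n => (hφ n).1.continuousOn
  have hgcont : ∀ a : Fin N → ℝ,
      ContinuousOn (fun z => ∑ n, a n * φ n z) (closure ω) := fun a =>
    continuousOn_finset_sum _ fun n _ => continuousOn_const.mul ((hcontφ n).mono hωsub)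
  have hint : ∀ a : Fin N → ℝ,
      IntegrableOn (fun z => (∑ n, a n * φ n z) ^ 2) ω volume := fun a =>
    (((hgcont a).pow 2).integrableOn_compact hωcl).mono_set subset_closure
  set Φ : EuclideanSpace ℝ (Fin N) → ℝ :=
    fun a => ∫ z in ω, (∑ n, a n * φ n z) ^ 2 with hΦ
  have hΦnn : ∀ a, 0 ≤ Φ a := fun a => integral_nonneg fun z => sq_nonneg _
  have hM : ∀ n m : Fin N, IntegrableOn (fun z => φ n z * φ m z) ω volume := fun n m =>
    ((((hcontφ n).mono hωsub).mul ((hcontφ m).mono hωsub)).integrableOn_compact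
      hωcl).mono_set subset_closure
  have hΦeq : ∀ a : EuclideanSpace ℝ (Fin N),
      Φ a = ∑ n, ∑ m, (a n * a m) * ∫ z in ω, φ n z * φ m z := by
    intro a
    have h1 : ∀ z : ℂ, (∑ n, a n * φ n z) ^ 2 = ∑ n, ∑ m, (a n * a m) * (φ n z * φ m z) := by
      intro z
      rw [sq, Finset.sum_mul_sum]
      exact Finset.sum_congr rfl fun n _ => Finset.sum_congr rfl fun m _ => by ring
    calc Φ a = ∫ z in ω, ∑ n, ∑ m, (a n * a m) * (φ n z * φ m z) := by
          simp only [hΦ, h1]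
      _ = ∑ n, ∫ z in ω, ∑ m, (a n * a m) * (φ n z * φ m z) :=
          integral_finset_sum _ fun n _ =>
            integrable_finset_sum _ fun m _ => (hM n m).const_mul _
      _ = ∑ n, ∑ m, ∫ z in ω, (a n * a m) * (φ n z * φ m z) :=
          Finset.sum_congr rfl fun n _ =>
            integral_finset_sum _ fun m _ => (hM n m).const_mul _
      _ = ∑ n, ∑ m, (a n * a m) * ∫ z in ω, φ n z * φ m z := by
          simp only [integral_const_mul]
  have hΦcont : Continuous Φ := by
    have h2 : Φ = fun a : EuclideanSpace ℝ (Fin N) =>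
        ∑ n, ∑ m, (a n * a m) * ∫ z in ω, φ n z * φ m z := funext hΦeq
    rw [h2]
    exact continuous_finset_sum _ fun n _ => continuous_finset_sum _ fun m _ =>
      ((EuclideanSpace.proj n).continuous.mul (EuclideanSpace.proj m).continuous).mul
        continuous_const
  have hΦpos : ∀ a : EuclideanSpace ℝ (Fin N), a ≠ 0 → 0 < Φ a := by
    intro a ha
    rcases lt_or_eq_of_le (hΦnn a) with h | h
    · exact h
    exfalso
    have hae : (fun z => (∑ n, a n * φ n z) ^ 2) =ᵐ[volume.restrict ω] 0 :=
      (integral_eq_zero_iff_of_nonneg (fun z => sq_nonneg _) (hint a)).mp h.symm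
    have hg0 : ∀ z ∈ ω, ∑ n, a n * φ n z = 0 := by
      by_contra hcon
      push_neg at hcon
      obtain ⟨z, hzω, hz0⟩ := hcon
      set V := ω ∩ (fun z => ∑ n, a n * φ n z) ⁻¹' {x | x ≠ 0} with hV
      have hVo : IsOpen V :=
        ContinuousOn.isOpen_inter_preimage ((hgcont a).mono subset_closure) hωopen isOpen_ne
      have hVpos : 0 < volume V := hVo.measure_pos volume ⟨z, hzω, hz0⟩
      have hsub0 : V ⊆ {w | ¬ (fun z => (∑ n, a n * φ n z) ^ 2) w = (0 : ℂ → ℝ) w} := by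
        rintro w ⟨_, hw2⟩
        simp only [Set.mem_setOf_eq, Pi.zero_apply, pow_eq_zero_iff (two_ne_zero)]
        exact hw2
      have hnull : volume.restrict ω {w | ¬ (fun z => (∑ n, a n * φ n z) ^ 2) w
          = (0 : ℂ → ℝ) w} = 0 := hae
      have hVnull : volume.restrict ω V = 0 := measure_mono_null hsub0 hnull
      rw [Measure.restrict_apply hVo.measurableSet] at hVnull
      have : V ∩ ω = V := by rw [hV]; ext w; simp; tauto
      rw [this] at hVnull
      exact absurd hVnull hVpos.ne'
    have hharm := harmonic_sum Ω hΩopen N φ hφ a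
    have hgΩ : ∀ z ∈ Ω, ∑ n, a n * φ n z = 0 :=
      harmonic_unique_cont (fun z => ∑ n, a n * φ n z) Ω hΩopen hΩconn.isPreconnected
        hharm.1 hharm.2 ω hωopen hωne (subset_closure.trans hωsub) hg0
    have hall := hindep a hgΩ
    exact ha (by ext n; exact hall n)
  rcases Nat.eq_zero_or_pos N with hN | hN
  · refine ⟨1, one_pos, fun a => ?_⟩
    subst hN
    have ha : a = 0 := Subsingleton.elim a 0
    rw [ha, norm_zero, one_mul]
    positivity
  · haveI : Nontrivial (EuclideanSpace ℝ (Fin N)) := by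
      refine ⟨⟨EuclideanSpace.single ⟨0, hN⟩ (1 : ℝ), 0, ?_⟩⟩
      intro h
      have := congrArg (fun v : EuclideanSpace ℝ (Fin N) => v ⟨0, hN⟩) h
      simp [EuclideanSpace.single_apply] at this
    have hsne : (Metric.sphere (0 : EuclideanSpace ℝ (Fin N)) 1).Nonempty :=
      NormedSpace.sphere_nonempty.mpr (by norm_num)
    obtain ⟨b₀, hb₀, hmin⟩ :=
      (isCompact_sphere (0 : EuclideanSpace ℝ (Fin N)) 1).exists_isMinOn hsne
        hΦcont.continuousOn
    set m := Φ b₀ with hm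
    have hb₀norm : ‖b₀‖ = 1 := mem_sphere_zero_iff_norm.mp hb₀
    have hmpos : 0 < m := hΦpos b₀ (by
      intro h; rw [h, norm_zero] at hb₀norm; norm_num at hb₀norm)
    refine ⟨(Real.sqrt m)⁻¹, inv_pos.mpr (Real.sqrt_pos.mpr hmpos), fun a => ?_⟩
    rcases eq_or_ne a 0 with rfl | ha
    · rw [norm_zero]
      positivity
    · have hna : 0 < ‖a‖ := norm_pos_iff.mpr ha
      set b : EuclideanSpace ℝ (Fin N) := ‖a‖⁻¹ • a with hb
      have hbs : b ∈ Metric.sphere (0 : EuclideanSpace ℝ (Fin N)) 1 := by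
        rw [mem_sphere_zero_iff_norm, hb, norm_smul, norm_inv, norm_norm,
          inv_mul_cancel₀ hna.ne']
      have hcoord : ∀ n, a n = ‖a‖ * b n := by
        intro n
        show a n = ‖a‖ * (‖a‖⁻¹ * a n)
        field_simp
      have hptw : ∀ z : ℂ, (∑ n, a n * φ n z) ^ 2 = ‖a‖ ^ 2 * (∑ n, b n * φ n z) ^ 2 := by
        intro z
        have h3 : (∑ n, a n * φ n z) = ‖a‖ * (∑ n, b n * φ n z) := by
          rw [Finset.mul_sum]
          exact Finset.sum_congr rfl fun n _ => by rw [hcoord n]; ring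
        rw [h3, mul_pow]
      have hΦab : Φ a = ‖a‖ ^ 2 * Φ b := by
        simp only [hΦ]
        simp_rw [hptw]
        rw [integral_const_mul]
      have hΦb : m ≤ Φ b := hmin hbs
      have h1 : Real.sqrt (Φ a) = ‖a‖ * Real.sqrt (Φ b) := by
        rw [hΦab, Real.sqrt_mul (sq_nonneg _), Real.sqrt_sq hna.le]
      have h2 : Real.sqrt m ≤ Real.sqrt (Φ b) := Real.sqrt_le_sqrt hΦb
      have hsm : 0 < Real.sqrt m := Real.sqrt_pos.mpr hmpos
      calc ‖a‖ = (Real.sqrt m)⁻¹ * (‖a‖ * Real.sqrt m) := by field_simp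
        _ ≤ (Real.sqrt m)⁻¹ * (‖a‖ * Real.sqrt (Φ b)) := by gcongr
        _ = (Real.sqrt m)⁻¹ * Real.sqrt (Φ a) := by rw [h1]
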